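/- Let $Z$ be a topological space covered by a family of open sets closed under the following two operations: (i) if the property P holds on open sets $U$, $V$, and on $U \cap V$, then P holds on $U \cup V$; (ii) if P holds on each member of a disjoint family $\{U_\alpha\}$ of open sets, then P holds on $\bigcup_\alpha U_\alpha$. If $Z$ is a smooth manifold and P holds on every open set diffeomorphic to a convex open subset of $\mathbb{R}^{\dim Z}$, then P holds on $Z$. -/

import Mathlib

/-!
Sources of smooth charts form a basis of `Z` closed under finite intersections, and `P` holds on
each of them: inside one chart, convex open sets form a basis closed under intersections on which
`P` holds by hypothesis. So it suffices to show that `P` propagates from such a basis `𝒢` to the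
whole space. By induction with (i), `P` holds on finite unions of members of `𝒢`, and these are
again closed under intersections. Cover the compact bands `K (2m+2) \ int K (2m)` of a compact
exhaustion by finite unions `A m` of members of `𝒢`, each inside a neighbourhood of its band, so
that `A i` and `A j` are disjoint once `j ≥ i + 2`. Then the even and the odd `A m` are disjoint
families, as is their intersection `⋃ₖ A (2k+1) ∩ (A (2k) ∪ A (2k+2))`, so (ii) and one more use
of (i) give `P` on `⋃ A m = Z`.
-/

open scoped Manifold

open Set Topology TopologicalSpace Function

section

variable {X : Type*}

def finiteUnions (𝒢 : Set (Set X)) : Set (Set X) :=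
  {U | ∃ S ⊆ 𝒢, S.Finite ∧ ⋃₀ S = U}

variable {𝒢 : Set (Set X)} {U V : Set X}

theorem union_mem_finiteUnions (hU : U ∈ finiteUnions 𝒢) (hV : V ∈ finiteUnions 𝒢) :
    U ∪ V ∈ finiteUnions 𝒢 := by
  obtain ⟨S, hS𝒢, hS, rfl⟩ := hU
  obtain ⟨T, hT𝒢, hT, rfl⟩ := hV
  exact ⟨S ∪ T, union_subset hS𝒢 hT𝒢, hS.union hT, sUnion_union S T⟩

theorem inter_mem_finiteUnions (h𝒢 : ∀ G ∈ 𝒢, ∀ G' ∈ 𝒢, G ∩ G' ∈ 𝒢)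
    (hU : U ∈ finiteUnions 𝒢) (hV : V ∈ finiteUnions 𝒢) : U ∩ V ∈ finiteUnions 𝒢 := by
  obtain ⟨S, hS𝒢, hS, rfl⟩ := hU
  obtain ⟨T, hT𝒢, hT, rfl⟩ := hV
  refine ⟨image2 (· ∩ ·) S T, ?_, hS.image2 _ hT, ?_⟩
  · rintro _ ⟨G, hG, G', hG', rfl⟩
    exact h𝒢 G (hS𝒢 hG) G' (hT𝒢 hG')
  · rw [sUnion_image2, sUnion_inter_sUnion, biUnion_prod']

theorem iUnion_two_mul_union_iUnion_two_mul_add_one (A : ℕ → Set X) :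
    (⋃ k, A (2 * k)) ∪ (⋃ k, A (2 * k + 1)) = ⋃ m, A m := by
  ext x
  simp only [mem_union, mem_iUnion]
  constructor
  · rintro (⟨k, hk⟩ | ⟨k, hk⟩)
    exacts [⟨_, hk⟩, ⟨_, hk⟩]
  · rintro ⟨m, hm⟩
    obtain ⟨k, rfl | rfl⟩ := Nat.even_or_odd' m
    exacts [.inl ⟨k, hm⟩, .inr ⟨k, hm⟩]

theorem iUnion_two_mul_inter_iUnion_two_mul_add_one {A : ℕ → Set X}
    (hgap : ∀ i j, i + 2 ≤ j → Disjoint (A i) (A j)) :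
    (⋃ k, A (2 * k)) ∩ (⋃ k, A (2 * k + 1)) =
      ⋃ k, A (2 * k + 1) ∩ (A (2 * k) ∪ A (2 * k + 2)) := by
  have hmeet : ∀ {j k x}, x ∈ A (2 * j) → x ∈ A (2 * k + 1) → j = k ∨ j = k + 1 := by
    intro j k x hj hk
    by_contra! h
    rcases lt_or_gt_of_ne h.1 with h' | h'
    · exact disjoint_left.1 (hgap (2 * j) (2 * k + 1) (by omega)) hj hk
    · exact disjoint_left.1 (hgap (2 * k + 1) (2 * j) (by omega)) hk hj
  ext x
  simp only [mem_inter_iff, mem_iUnion, mem_union]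
  constructor
  · rintro ⟨⟨j, hj⟩, ⟨k, hk⟩⟩
    rcases hmeet hj hk with rfl | rfl
    exacts [⟨j, hk, .inl hj⟩, ⟨k, hk, .inr hj⟩]
  · rintro ⟨k, hk, hj | hj⟩
    exacts [⟨⟨k, hj⟩, ⟨k, hk⟩⟩, ⟨⟨k + 1, hj⟩, ⟨k, hk⟩⟩]

end

section

variable {X Y : Type*} [TopologicalSpace X] [TopologicalSpace Y]

theorem isOpen_of_mem_finiteUnions {𝒢 : Set (Set X)} (h𝒢 : ∀ G ∈ 𝒢, IsOpen G) {U : Set X}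
    (hU : U ∈ finiteUnions 𝒢) : IsOpen U := by
  obtain ⟨S, hS𝒢, -, rfl⟩ := hU
  exact isOpen_sUnion fun G hG => h𝒢 G (hS𝒢 hG)

structure MayerVietorisProperty (Q : Set X → Prop) : Prop where
  union : ∀ U V, IsOpen U → IsOpen V → Q U → Q V → Q (U ∩ V) → Q (U ∪ V)
  iUnion : ∀ (ι : Type) (U : ι → Set X), (∀ i, IsOpen (U i)) → Pairwise (Disjoint on U) →
    (∀ i, Q (U i)) → Q (⋃ i, U i)

namespace MayerVietorisProperty

variable {Q : Set X → Prop} {𝒢 : Set (Set X)}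

theorem empty (hQ : MayerVietorisProperty Q) : Q ∅ := by
  simpa using hQ.iUnion Empty Empty.elim (fun i => i.elim) (fun i => i.elim) (fun i => i.elim)

theorem image_of_isOpenEmbedding (hQ : MayerVietorisProperty Q) {φ : Y → X}
    (hφ : IsOpenEmbedding φ) : MayerVietorisProperty fun U => Q (φ '' U) where
  union U V hU hV hQU hQV hQUV := by
    rw [image_union]
    refine hQ.union _ _ (hφ.isOpenMap U hU) (hφ.isOpenMap V hV) hQU hQV ?_
    rwa [← image_inter hφ.injective]
  iUnion ι U hU hUdisj hQU := by
    rw [image_iUnion]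
    refine hQ.iUnion ι _ (fun i => hφ.isOpenMap _ (hU i)) (fun i j hij => ?_) hQU
    exact (disjoint_image_iff hφ.injective).2 (hUdisj hij)

theorem inter_sUnion (hQ : MayerVietorisProperty Q) (h𝒢o : ∀ G ∈ 𝒢, IsOpen G)
    (h𝒢 : ∀ G ∈ 𝒢, ∀ G' ∈ 𝒢, G ∩ G' ∈ 𝒢) (hQ𝒢 : ∀ G ∈ 𝒢, Q G) {S : Set (Set X)}
    (hS : S.Finite) (hS𝒢 : S ⊆ 𝒢) {G : Set X} (hG : G ∈ 𝒢) : Q (G ∩ ⋃₀ S) := by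
  induction S, hS using Set.Finite.induction_on generalizing G with
  | empty => simpa using hQ.empty
  | @insert G' S _ hS ih =>
    obtain ⟨hG', hS𝒢⟩ := insert_subset_iff.1 hS𝒢
    have hS_open : IsOpen (⋃₀ S) := isOpen_sUnion fun G hG => h𝒢o G (hS𝒢 hG)
    rw [sUnion_insert, inter_union_distrib_left]
    refine hQ.union _ _ ((h𝒢o G hG).inter (h𝒢o G' hG')) ((h𝒢o G hG).inter hS_open)
      (hQ𝒢 _ (h𝒢 G hG G' hG')) (ih hS𝒢 hG) ?_
    rw [← inter_inter_distrib_left, ← inter_assoc]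
    exact ih hS𝒢 (h𝒢 G hG G' hG')

theorem of_mem_finiteUnions (hQ : MayerVietorisProperty Q) (h𝒢o : ∀ G ∈ 𝒢, IsOpen G)
    (h𝒢 : ∀ G ∈ 𝒢, ∀ G' ∈ 𝒢, G ∩ G' ∈ 𝒢) (hQ𝒢 : ∀ G ∈ 𝒢, Q G) {U : Set X}
    (hU : U ∈ finiteUnions 𝒢) : Q U := by
  obtain ⟨S, hS𝒢, hS, rfl⟩ := hU
  induction S, hS using Set.Finite.induction_on with
  | empty => simpa using hQ.empty
  | @insert G S _ hS ih =>
    obtain ⟨hG, hS𝒢⟩ := insert_subset_iff.1 hS𝒢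
    rw [sUnion_insert]
    exact hQ.union _ _ (h𝒢o G hG) (isOpen_sUnion fun G hG => h𝒢o G (hS𝒢 hG)) (hQ𝒢 G hG)
      (ih hS𝒢) (hQ.inter_sUnion h𝒢o h𝒢 hQ𝒢 hS hS𝒢 hG)

theorem iUnion_of_disjoint_of_add_two_le (hQ : MayerVietorisProperty Q) {A : ℕ → Set X}
    (hA : ∀ m, IsOpen (A m)) (hgap : ∀ i j, i + 2 ≤ j → Disjoint (A i) (A j))
    (hQA : ∀ m, Q (A m)) (hQA' : ∀ k, Q (A (2 * k + 1) ∩ (A (2 * k) ∪ A (2 * k + 2)))) :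
    Q (⋃ m, A m) := by
  have hdisj : ∀ r {B : ℕ → Set X}, (∀ k, B k ⊆ A (2 * k + r)) → Pairwise (Disjoint on B) := by
    intro r B hB k l hkl
    refine Disjoint.mono (hB k) (hB l) ?_
    rcases lt_or_gt_of_ne hkl with h | h
    exacts [hgap _ _ (by omega), (hgap _ _ (by omega)).symm]
  rw [← iUnion_two_mul_union_iUnion_two_mul_add_one]
  refine hQ.union _ _ (isOpen_iUnion fun k => hA _) (isOpen_iUnion fun k => hA _)
    (hQ.iUnion ℕ _ (fun k => hA _) (hdisj 0 fun k => subset_rfl) fun k => hQA _)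
    (hQ.iUnion ℕ _ (fun k => hA _) (hdisj 1 fun k => subset_rfl) fun k => hQA _) ?_
  rw [iUnion_two_mul_inter_iUnion_two_mul_add_one hgap]
  exact hQ.iUnion ℕ _ (fun k => (hA _).inter ((hA _).union (hA _)))
    (hdisj 1 fun k => inter_subset_left) hQA'

end MayerVietorisProperty

theorem TopologicalSpace.IsTopologicalBasis.exists_mem_finiteUnions_between {𝒢 : Set (Set X)}
    (h𝒢 : IsTopologicalBasis 𝒢) {K O : Set X} (hK : IsCompact K) (hO : IsOpen O)
    (hKO : K ⊆ O) : ∃ U ∈ finiteUnions 𝒢, K ⊆ U ∧ U ⊆ O := by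
  have hcover : K ⊆ ⋃ G ∈ {G ∈ 𝒢 | G ⊆ O}, G := by
    rw [← sUnion_eq_biUnion, ← h𝒢.open_eq_sUnion' hO]
    exact hKO
  obtain ⟨S, hSO, hS, hKS⟩ := hK.elim_finite_subcover_image (fun G hG => h𝒢.isOpen hG.1) hcover
  refine ⟨⋃₀ S, ⟨S, fun G hG => (hSO hG).1, hS, rfl⟩, by rwa [sUnion_eq_biUnion], ?_⟩
  exact sUnion_subset fun G hG => (hSO hG).2

theorem exists_isCompact_subset_isOpen_bands [T2Space X] [WeaklyLocallyCompactSpace X]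
    [SigmaCompactSpace X] :
    ∃ B O : ℕ → Set X, (∀ m, IsCompact (B m)) ∧ (∀ m, IsOpen (O m)) ∧ (∀ m, B m ⊆ O m) ∧
      ⋃ m, B m = univ ∧ ∀ i j, i + 2 ≤ j → Disjoint (O i) (O j) := by
  -- `K 0 = ∅`, so for `m = 0` the truncated `2 * m - 1 = 0` removes nothing from `O 0`.
  let K := (CompactExhaustion.choice X).shiftr
  refine ⟨fun m => K (2 * m + 2) \ interior (K (2 * m)),
    fun m => interior (K (2 * m + 3)) \ K (2 * m - 1),
    fun m => (K.isCompact _).diff isOpen_interior,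
    fun m => isOpen_interior.sdiff (K.isCompact _).isClosed, fun m => ?_, ?_, ?_⟩
  · rintro x ⟨hx, hx'⟩
    refine ⟨K.subset_interior_succ _ hx, fun hx'' => hx' ?_⟩
    rcases m with _ | m
    · exact absurd hx'' (notMem_empty x)
    · exact K.subset_interior (by omega) hx''
  · refine eq_univ_of_forall fun x => mem_iUnion.2 ⟨(CompactExhaustion.choice X).find x / 2, ?_⟩
    obtain ⟨hx, hx'⟩ := (CompactExhaustion.choice X).mem_sdiff_shiftr_find x
    exact ⟨K.subset (by omega) hx, fun hx'' => hx' (K.subset (by omega) (interior_subset hx''))⟩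
  · intro i j hij
    refine disjoint_left.2 fun x hxi hxj => hxj.2 ?_
    exact K.subset (by omega) (interior_subset hxi.1)

theorem TopologicalSpace.IsTopologicalBasis.exists_mem_finiteUnions_cover [T2Space X]
    [WeaklyLocallyCompactSpace X] [SigmaCompactSpace X] {𝒢 : Set (Set X)}
    (h𝒢 : IsTopologicalBasis 𝒢) :
    ∃ A : ℕ → Set X, (∀ m, A m ∈ finiteUnions 𝒢) ∧ ⋃ m, A m = univ ∧
      ∀ i j, i + 2 ≤ j → Disjoint (A i) (A j) := by
  obtain ⟨B, O, hB, hO, hBO, hBcover, hOdisj⟩ := exists_isCompact_subset_isOpen_bands (X := X)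
  choose A hA hBA hAO using fun m => h𝒢.exists_mem_finiteUnions_between (hB m) (hO m) (hBO m)
  refine ⟨A, hA, eq_univ_of_univ_subset ?_, fun i j hij => (hOdisj i j hij).mono (hAO i) (hAO j)⟩
  exact hBcover ▸ iUnion_mono hBA

theorem MayerVietorisProperty.univ_of_isTopologicalBasis [T2Space X]
    [WeaklyLocallyCompactSpace X] [SigmaCompactSpace X] {Q : Set X → Prop} {𝒢 : Set (Set X)}
    (hQ : MayerVietorisProperty Q) (h𝒢 : IsTopologicalBasis 𝒢)
    (h𝒢inter : ∀ G ∈ 𝒢, ∀ G' ∈ 𝒢, G ∩ G' ∈ 𝒢) (hQ𝒢 : ∀ G ∈ 𝒢, Q G) : Q univ := by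
  obtain ⟨A, hA, hAcover, hAdisj⟩ := h𝒢.exists_mem_finiteUnions_cover
  have hQ' : ∀ {U}, U ∈ finiteUnions 𝒢 → Q U :=
    hQ.of_mem_finiteUnions (fun G => h𝒢.isOpen) h𝒢inter hQ𝒢
  rw [← hAcover]
  exact hQ.iUnion_of_disjoint_of_add_two_le
    (fun m => isOpen_of_mem_finiteUnions (fun G => h𝒢.isOpen) (hA m)) hAdisj (fun m => hQ' (hA m))
    fun k => hQ' (inter_mem_finiteUnions h𝒢inter (hA _) (union_mem_finiteUnions (hA _) (hA _)))

end

section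

variable {E : Type*} [NormedAddCommGroup E] [NormedSpace ℝ E]
  {M : Type*} [TopologicalSpace M] [ChartedSpace E M] {k : WithTop ℕ∞}

variable (E k) in
def IsConvexChartDomain (U : Set M) : Prop :=
  ∃ e : PartialHomeomorph M E, e.source = U ∧ Convex ℝ e.target ∧
    ContMDiffOn 𝓘(ℝ, E) 𝓘(ℝ, E) k e e.source ∧ ContMDiffOn 𝓘(ℝ, E) 𝓘(ℝ, E) k e.symm e.target

variable (k) in
def IsContMDiffChart (e : OpenPartialHomeomorph M E) : Prop :=
  ContMDiffOn 𝓘(ℝ, E) 𝓘(ℝ, E) k e e.source ∧ ContMDiffOn 𝓘(ℝ, E) 𝓘(ℝ, E) k e.symm e.target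

theorem isContMDiffChart_chartAt [IsManifold 𝓘(ℝ, E) k M] (x : M) :
    IsContMDiffChart k (chartAt E x) :=
  ⟨contMDiffOn_chart, contMDiffOn_chart_symm⟩

theorem IsContMDiffChart.restrOpen {e : OpenPartialHomeomorph M E} (he : IsContMDiffChart k e)
    {s : Set M} (hs : IsOpen s) : IsContMDiffChart k (e.restrOpen s hs) :=
  ⟨he.1.mono inter_subset_left, he.2.mono inter_subset_left⟩

theorem IsContMDiffChart.isConvexChartDomain {e : OpenPartialHomeomorph M E}
    (he : IsContMDiffChart k e) {s : Set M} (hs : IsOpen s) (hse : s ⊆ e.source)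
    (hconv : Convex ℝ (e '' s)) : IsConvexChartDomain E k s := by
  refine ⟨(e.restrOpen s hs).toPartialHomeomorph, inter_eq_right.2 hse, ?_, (he.restrOpen hs).1,
    (he.restrOpen hs).2⟩
  rwa [e.image_eq_target_inter_inv_preimage hse] at hconv

theorem Topology.IsOpenEmbedding.isTopologicalBasis_convex_image {Y : Type*} [TopologicalSpace Y]
    {g : Y → E} (hg : IsOpenEmbedding g) :
    IsTopologicalBasis {G : Set Y | IsOpen G ∧ Convex ℝ (g '' G)} := by
  refine isTopologicalBasis_of_isOpen_of_nhds (fun G hG => hG.1) fun y O hy hO => ?_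
  obtain ⟨ε, hε, hball⟩ := Metric.isOpen_iff.1 (hg.isOpenMap O hO) (g y) (mem_image_of_mem g hy)
  refine ⟨g ⁻¹' Metric.ball (g y) ε, ⟨Metric.isOpen_ball.preimage hg.continuous, ?_⟩,
    Metric.mem_ball_self hε, ?_⟩
  · rw [image_preimage_eq_of_subset (hball.trans (image_subset_range g O))]
    exact convex_ball _ _
  · rw [← hg.injective.preimage_image O]
    exact preimage_mono hball

theorem MayerVietorisProperty.source_of_isContMDiffChart [FiniteDimensional ℝ E]
    {P : Set M → Prop} (hP : MayerVietorisProperty P)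
    (hconv : ∀ U, IsOpen U → IsConvexChartDomain E k U → P U) {e : OpenPartialHomeomorph M E}
    (he : IsContMDiffChart k e) : P e.source := by
  have hg := e.isOpenEmbedding_restrict
  have : LocallyCompactSpace e.source := hg.locallyCompactSpace
  have : SecondCountableTopology e.source := hg.isEmbedding.secondCountableTopology
  have : T2Space e.source := hg.isEmbedding.t2Space
  have hPe := hP.image_of_isOpenEmbedding e.open_source.isOpenEmbedding_subtypeVal
  have := hPe.univ_of_isTopologicalBasis hg.isTopologicalBasis_convex_image ?_ ?_
  · simpa using this
  · rintro G ⟨hG, hGc⟩ G' ⟨hG', hGc'⟩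
    exact ⟨hG.inter hG', by rw [image_inter hg.injective]; exact hGc.inter hGc'⟩
  · rintro G ⟨hG, hGc⟩
    refine hconv _ (e.open_source.isOpenMap_subtype_val G hG) (he.isConvexChartDomain
      (e.open_source.isOpenMap_subtype_val G hG) (Subtype.coe_image_subset _ G) ?_)
    rwa [image_image]

theorem MayerVietorisProperty.univ_of_isConvexChartDomain [FiniteDimensional ℝ E]
    [IsManifold 𝓘(ℝ, E) k M] [T2Space M] [SigmaCompactSpace M] {P : Set M → Prop}
    (hP : MayerVietorisProperty P) (hconv : ∀ U, IsOpen U → IsConvexChartDomain E k U → P U) :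
    P univ := by
  have : LocallyCompactSpace M := ChartedSpace.locallyCompactSpace E M
  refine hP.univ_of_isTopologicalBasis
    (𝒢 := {U | ∃ e : OpenPartialHomeomorph M E, IsContMDiffChart k e ∧ e.source = U}) ?_ ?_ ?_
  · refine isTopologicalBasis_of_isOpen_of_nhds ?_ fun x O hx hO => ?_
    · rintro _ ⟨e, -, rfl⟩
      exact e.open_source
    · exact ⟨_, ⟨_, (isContMDiffChart_chartAt x).restrOpen hO, rfl⟩,
        ⟨mem_chart_source E x, hx⟩, inter_subset_right⟩
  · rintro _ ⟨e, he, rfl⟩ _ ⟨e', -, rfl⟩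
    exact ⟨_, he.restrOpen e'.open_source, rfl⟩
  · rintro _ ⟨e, he, rfl⟩
    exact hP.source_of_isContMDiffChart hconv he

end

/-- Mayer–Vietoris induction principle.  Let `Z` be a smooth
`n`-manifold and `P` a property of open subsets of `Z` such that:
(i) if `P` holds on open sets `U`, `V` and on `U ∩ V`, then it holds on `U ∪ V`;
(ii) if `P` holds on each member of a pairwise disjoint family of open sets, then
it holds on their union.
If `P` holds on every open set diffeomorphic to a convex open subset of `ℝⁿ`
(realized as `EuclideanSpace ℝ (Fin n)`), then `P` holds on `Z`. -/
theorem mayer_vietoris_induction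
    {n : ℕ} {Z : Type} [TopologicalSpace Z]
    [ChartedSpace (EuclideanSpace ℝ (Fin n)) Z]
    [IsManifold (𝓡 n) ((⊤ : ℕ∞) : WithTop ℕ∞) Z]
    [T2Space Z] [SigmaCompactSpace Z]
    (P : Set Z → Prop)
    (hUnion : ∀ U V : Set Z, IsOpen U → IsOpen V →
      P U → P V → P (U ∩ V) → P (U ∪ V))
    (hDisjoint : ∀ (ι : Type) (U : ι → Set Z), (∀ i, IsOpen (U i)) →
      Pairwise (Function.onFun Disjoint U) → (∀ i, P (U i)) → P (⋃ i, U i))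
    (hConvex : ∀ U : Set Z, IsOpen U →
      (∃ e : PartialHomeomorph Z (EuclideanSpace ℝ (Fin n)),
        e.source = U ∧ Convex ℝ e.target ∧
        ContMDiffOn (𝓡 n) (𝓡 n) (⊤ : ℕ∞) e e.source ∧
        ContMDiffOn (𝓡 n) (𝓡 n) (⊤ : ℕ∞) e.symm e.target) → P U) :
    P Set.univ :=
  MayerVietorisProperty.univ_of_isConvexChartDomain ⟨hUnion, hDisjoint⟩ hConvex
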